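/- arXiv:math/0701892 — 5 statements merged into one kernel-verified Lean document; each statement's English description precedes it below -/
import Mathlib

section
/- Let S be a finite p-group, embedded in the symmetric group Σ = Sym(S) via the Cayley (left regular) embedding. Then for any subgroups P, Q ≤ S and any injective group homomorphism φ : P → Q, there exists σ ∈ Σ such that σ⁻¹ u σ = φ(u) for all u ∈ P. -/
/-!
A permutation `σ` conjugates left multiplication by `u` into left multiplication by `φ u`
exactly when `σ (φ u * x) = u * σ x`. Choosing right transversals `T` of `P` and `T'` of
`φ(P)` writes `S = P × T = φ(P) × T'`, with left multiplication acting on the first factor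
only. Isomorphic subgroups of a finite group have the same index, so there is a bijection
`e : T' ≃ T`, and `σ (k * t') = φ⁻¹ k * e t'` is the required permutation.
-/

open Equiv

namespace Subgroup

variable {G : Type*} [Group G]

theorem index_eq_of_mulEquiv [Finite G] {H K : Subgroup G} (ψ : H ≃* K) : H.index = K.index :=
  Nat.eq_of_mul_eq_mul_left Nat.card_pos <| by
    rw [card_mul_index, Nat.card_congr ψ.toEquiv, card_mul_index]

theorem exists_perm_conj_mulLeft_eq [Finite G] {H K : Subgroup G} (ψ : H ≃* K) :
    ∃ σ : Perm G, ∀ h : H, σ⁻¹ * Equiv.mulLeft (h : G) * σ = Equiv.mulLeft (ψ h : G) := by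
  obtain ⟨T, hT, -⟩ := H.exists_isComplement_right 1
  obtain ⟨T', hT', -⟩ := K.exists_isComplement_right 1
  obtain ⟨e⟩ : Nonempty (T' ≃ T) := Finite.card_eq.mp <| by
    rw [hT.card_right, hT'.card_right, index_eq_of_mulEquiv ψ]
  let σ : Perm G := hT'.equiv.trans ((ψ.symm.toEquiv.prodCongr e).trans hT.equiv.symm)
  have hσ (h : H) (x : G) : σ (ψ h * x) = h * σ x := by
    simp only [σ, trans_apply, hT'.equiv_mul_left, prodCongr_apply, Prod.map_apply]
    rw [hT.equiv_symm_apply, hT.equiv_symm_apply]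
    simp [mul_assoc]
  refine ⟨σ, fun h => ?_⟩
  rw [mul_assoc, inv_mul_eq_iff_eq_mul]
  ext x
  exact (hσ h x).symm

end Subgroup

theorem stmt0_general (S : Type*) [Group S] [Fintype S]
    (P Q : Subgroup S) (φ : ↥P →* ↥Q)
    (hφ : Function.Injective φ) :
    ∃ σ : Equiv.Perm S, ∀ u : ↥P,
      σ⁻¹ * (Equiv.mulLeft (u : S)) * σ = Equiv.mulLeft ((φ u : ↥Q) : S) :=
  Subgroup.exists_perm_conj_mulLeft_eq
    (MonoidHom.ofInjective (f := Q.subtype.comp φ) (Q.subtype_injective.comp hφ))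

/-- Every injective homomorphism between subgroups of a finite
`p`-group `S` is realized by conjugation by a permutation of `S`, where `S`
is embedded in `Equiv.Perm S` via the Cayley (left regular) embedding. -/
theorem stmt0 (p : ℕ) (hp : p.Prime) (S : Type*) [Group S] [Fintype S]
    (hS : IsPGroup p S) (P Q : Subgroup S) (φ : ↥P →* ↥Q)
    (hφ : Function.Injective φ) :
    ∃ σ : Equiv.Perm S, ∀ u : ↥P,
      σ⁻¹ * (Equiv.mulLeft (u : S)) * σ = Equiv.mulLeft ((φ u : ↥Q) : S) :=
  stmt0_general S P Q φ hφ
end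

section
/- Any action of a finite group H on a (nonempty) tree by graph automorphisms, such that no element of H swaps the two endpoints of any edge, has a fixed vertex. -/
/-!
Fix an orbit `H • v₀` and let `F u` be the largest distance from `u` to a point of it. `F` is
`H`-invariant, so `H` permutes the set `C` of minimisers of `F`. If `u, u'` are at distance at
least two in a tree, the neighbour `m` of `u` towards `u'` is strictly closer than `u` or `u'`
to every vertex, so `F m < max (F u) (F u')`. Hence `C` is a clique, i.e. a vertex or an edge
since trees are triangle-free, and an element of `H` moving a vertex of `C` would invert that
edge.
-/

open SimpleGraph Function

namespace SimpleGraph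

variable {V : Type*} {G : SimpleGraph V}

theorem Hom.edist_le {W : Type*} {G' : SimpleGraph W} (f : G →g G') (u v : V) :
    G'.edist (f u) (f v) ≤ G.edist u v :=
  le_sInf <| by
    rintro _ ⟨p, rfl⟩
    simpa using SimpleGraph.edist_le (p.map f)

theorem IsAcyclic.length_eq_dist_of_isPath (hG : G.IsAcyclic) {u v : V} {p : G.Walk u v}
    (hp : p.IsPath) : p.length = G.dist u v := by
  obtain ⟨q, hq, hql⟩ := p.reachable.exists_path_of_dist
  have hpq : p = q := congrArg Subtype.val ((hG.subsingleton_path u v).elim ⟨p, hp⟩ ⟨q, hq⟩)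
  rw [hpq, hql]

theorem IsAcyclic.isPath_append_cons (hG : G.IsAcyclic) {x u m y : V} {p : G.Walk x u}
    {q : G.Walk m y} (hadj : G.Adj u m) (hp : p.IsPath) (hq : (Walk.cons hadj q).IsPath)
    (hm : m ∉ p.support) : (p.append (Walk.cons hadj q)).IsPath := by
  rw [hG.isPath_iff_isChain, Walk.edges_append]
  refine ((hG.isPath_iff_isChain p).mp hp).append ((hG.isPath_iff_isChain _).mp hq) ?_
  rintro e he _ ⟨⟩ rfl
  exact hm (p.snd_mem_support_of_mem_edges (List.mem_of_mem_getLast? he))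

theorem IsTree.exists_dist_lt_or_dist_lt (hG : G.IsTree) {u u' : V} (h : 2 ≤ G.dist u u') :
    ∃ m, ∀ x, G.dist x m < G.dist x u ∨ G.dist x m < G.dist x u' := by
  classical
  obtain ⟨_ | @⟨_, m, _, hadj, q⟩, hP, hPl⟩ := hG.connected.exists_path_of_dist u u'
  · simp at h
  refine ⟨m, fun x => ?_⟩
  obtain ⟨Q, hQ, hQl⟩ := hG.connected.exists_path_of_dist x u
  by_cases hm : m ∈ Q.support
  · left
    calc G.dist x m ≤ (Q.takeUntil m hm).length := dist_le _
      _ < Q.length := Walk.length_takeUntil_lt_length hm hadj.ne'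
      _ = G.dist x u := hQl
  · -- `x ⟶ u ⟶ m ⟶ u'` is then a path, hence a geodesic passing through `u`
    right
    have hxu' := hG.isAcyclic.length_eq_dist_of_isPath <|
      hG.isAcyclic.isPath_append_cons hadj hQ hP hm
    have hxm := dist_le (Q.concat hadj)
    simp only [Walk.length_append, Walk.length_cons, Walk.length_concat] at hxu' hxm hPl
    omega

noncomputable def maxDist {ι : Type*} [Fintype ι] [Nonempty ι] (G : SimpleGraph V) (p : ι → V)
    (u : V) : ℕ :=
  Finset.univ.sup' Finset.univ_nonempty fun i => G.dist u (p i)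

theorem dist_le_maxDist {ι : Type*} [Fintype ι] [Nonempty ι] (p : ι → V) (u : V) (i : ι) :
    G.dist u (p i) ≤ G.maxDist p u :=
  Finset.le_sup' (fun i => G.dist u (p i)) (Finset.mem_univ i)

theorem IsTree.isClique_setOf_forall_maxDist_le {ι : Type*} [Fintype ι] [Nonempty ι]
    (hG : G.IsTree) (p : ι → V) : G.IsClique {u | ∀ w, G.maxDist p u ≤ G.maxDist p w} := by
  intro u hu u' hu' hne
  by_contra hnadj
  obtain ⟨m, hm⟩ :=
    hG.exists_dist_lt_or_dist_lt (hG.connected.one_lt_dist_of_ne_of_not_adj hne hnadj)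
  have : G.maxDist p m < max (G.maxDist p u) (G.maxDist p u') := by
    refine (Finset.sup'_lt_iff _).mpr fun i _ => ?_
    rw [dist_comm, lt_max_iff]
    refine (hm (p i)).imp (fun h => ?_) (fun h => ?_)
    · exact h.trans_le (dist_comm.trans_le (dist_le_maxDist p u i))
    · exact h.trans_le (dist_comm.trans_le (dist_le_maxDist p u' i))
  exact this.not_ge (max_le (hu m) (hu' m))

theorem CliqueFree.apply_eq_self_of_mapsTo (h3 : G.CliqueFree 3) {f : V → V}
    (hf : Injective f) (hinv : ∀ u v, G.Adj u v → ¬(f u = v ∧ f v = u)) {C : Set V}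
    (hC : G.IsClique C) (hfC : Set.MapsTo f C C) {c : V} (hc : c ∈ C) : f c = c := by
  classical
  by_contra hne
  have hadj : G.Adj c (f c) := hC hc (hfC hc) (Ne.symm hne)
  have hne' : f (f c) ≠ f c := hf.ne hne
  have hc'' : f (f c) = c := by
    by_contra hne''
    refine h3 {c, f c, f (f c)} (is3Clique_triple_iff.mpr ⟨hadj, ?_, ?_⟩)
    · exact hC hc (hfC (hfC hc)) (Ne.symm hne'')
    · exact hC (hfC hc) (hfC (hfC hc)) (Ne.symm hne')
  exact hinv c (f c) hadj ⟨rfl, hc''⟩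

end SimpleGraph

section Action

variable {H V : Type*} [Group H] [MulAction H V] {T : SimpleGraph V}

theorem dist_smul_smul_of_adj
    (hact : ∀ (h : H) (u v : V), T.Adj u v → T.Adj (h • u) (h • v)) (h : H) (u v : V) :
    T.dist (h • u) (h • v) = T.dist u v := by
  have hle : ∀ (g : H) (u v : V), T.edist (g • u) (g • v) ≤ T.edist u v := fun g =>
    Hom.edist_le ⟨(g • ·), hact g _ _⟩
  refine congrArg ENat.toNat (le_antisymm (hle h u v) ?_)
  simpa using hle h⁻¹ (h • u) (h • v)

theorem maxDist_orbit_smul [Fintype H]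
    (hact : ∀ (h : H) (u v : V), T.Adj u v → T.Adj (h • u) (h • v))
    (v₀ : V) (g : H) (u : V) :
    T.maxDist (fun h : H => h • v₀) (g • u) = T.maxDist (fun h : H => h • v₀) u := by
  have hle : ∀ (g : H) (u : V),
      T.maxDist (fun h : H => h • v₀) (g • u) ≤ T.maxDist (fun h : H => h • v₀) u := by
    refine fun g u => Finset.sup'_le _ _ fun h _ => ?_
    change T.dist (g • u) (h • v₀) ≤ _
    rw [← smul_inv_smul g (h • v₀), dist_smul_smul_of_adj hact, ← mul_smul]
    exact dist_le_maxDist (fun h : H => h • v₀) u (g⁻¹ * h)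
  refine le_antisymm (hle g u) ?_
  simpa using hle g⁻¹ (g • u)

end Action

/-- Any action of a finite group `H` on a (nonempty) tree by
graph automorphisms with no edge inversions has a fixed vertex. -/
theorem stmt3 (H : Type*) [Group H] [Finite H] (V : Type*) [MulAction H V]
    (T : SimpleGraph V) (hT : T.IsTree)
    (hact : ∀ (h : H) (u v : V), T.Adj u v → T.Adj (h • u) (h • v))
    (hcell : ∀ (h : H) (u v : V), T.Adj u v → ¬(h • u = v ∧ h • v = u)) :
    ∃ v : V, ∀ h : H, h • v = v := by
  have := Fintype.ofFinite H
  obtain ⟨v₀⟩ := hT.connected.nonempty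
  have : Nonempty V := ⟨v₀⟩
  let F := T.maxDist fun h : H => h • v₀
  set C := {u | ∀ w, F u ≤ F w}
  have hC : T.IsClique C := hT.isClique_setOf_forall_maxDist_le _
  have hCinv (h : H) : Set.MapsTo (h • ·) C C :=
    fun u hu w => (maxDist_orbit_smul hact v₀ h u).trans_le (hu w)
  have h3 : T.CliqueFree 3 := hT.isAcyclic.colorable_two.cliqueFree (by norm_num)
  exact ⟨argmin F, fun h =>
    h3.apply_eq_self_of_mapsTo (MulAction.injective h) (hcell h) hC (hCinv h)
      fun w => argmin_le F w⟩
end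

section
/- Let G be a group acting on a tree T by graph automorphisms, without edge inversions. If H ≤ G acts freely on (the vertices and edges of) T, then H is a free group. -/
noncomputable section Stmt5Aux

open CategoryTheory
open scoped Classical

universe uH uV

variable {H : Type uH} [Group H] {V : Type uV} [MulAction H V]

namespace Stmt5

/-- Objects of the quotient groupoid: orbits of vertices. -/
def Ob (H : Type uH) (V : Type uV) [Group H] [MulAction H V] : Type (max uV uH) :=
  ULift.{uH} (Quotient (MulAction.orbitRel H V))

/-- The class of a vertex. -/
def mkV (H : Type uH) [Group H] [MulAction H V] (v : V) :
    Quotient (MulAction.orbitRel H V) :=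
  Quotient.mk (MulAction.orbitRel H V) v

lemma mkV_smul (g : H) (v : V) : mkV H (g • v) = mkV H v :=
  @Quotient.sound _ (MulAction.orbitRel H V) _ _ (MulAction.mem_orbit v g)

lemma mkV_out (q : Quotient (MulAction.orbitRel H V)) : mkV H q.out = q :=
  Quotient.out_eq q

lemma exists_smul_out (v : V) : ∃ g : H, g • v = (mkV H v).out := by
  have h : (mkV H v).out ∈ MulAction.orbit H v :=
    @Quotient.exact _ (MulAction.orbitRel H V) _ _ (mkV_out (mkV H v))
  exact MulAction.mem_orbit_iff.mp h

variable (H) in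
/-- The unique group element carrying `v` to the chosen representative of its orbit. -/
def tr (v : V) : H := (exists_smul_out v).choose

lemma tr_spec (v : V) : tr H v • v = (mkV H v).out := (exists_smul_out v).choose_spec

section

variable (hfreeV : ∀ (h : H) (v : V), h • v = v → h = 1)

include hfreeV

lemma tr_eq {g : H} {v : V} (h : g • v = (mkV H v).out) : g = tr H v := by
  have h2 : ((tr H v)⁻¹ * g) • v = v := by
    rw [mul_smul, h, ← tr_spec v, inv_smul_smul]
  exact (inv_mul_eq_one.mp (hfreeV _ _ h2)).symm

lemma tr_smul (g : H) (v : V) : tr H (g • v) = tr H v * g⁻¹ := by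
  refine (tr_eq hfreeV ?_).symm
  rw [mul_smul, inv_smul_smul, tr_spec, mkV_smul]

lemma tr_out (q : Quotient (MulAction.orbitRel H V)) : tr H (q.out) = (1 : H) := by
  refine (tr_eq hfreeV ?_).symm
  rw [one_smul, mkV_out]

end

/-- Orientation on orbits of ordered pairs by a well-ordering. -/
def pos (H : Type uH) [Group H] [MulAction H V] (x y : V) : Prop :=
  WellOrderingRel (Quotient.mk (MulAction.orbitRel H (V × V)) (x, y))
    (Quotient.mk (MulAction.orbitRel H (V × V)) (y, x))

lemma mkE_smul (g : H) (x y : V) :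
    Quotient.mk (MulAction.orbitRel H (V × V)) (g • x, g • y)
      = Quotient.mk (MulAction.orbitRel H (V × V)) (x, y) := by
  refine @Quotient.sound _ (MulAction.orbitRel H (V × V)) _ _ ?_
  have : g • ((x, y) : V × V) = (g • x, g • y) := rfl
  rw [← this]
  exact MulAction.mem_orbit _ g

lemma pos_smul (g : H) (x y : V) : pos H (g • x) (g • y) ↔ pos H x y := by
  unfold pos
  rw [mkE_smul, mkE_smul]

section

variable (T : SimpleGraph V)
variable (hcell : ∀ (h : H) (u v : V), T.Adj u v → ¬(h • u = v ∧ h • v = u))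

include hcell

lemma mkE_ne {x y : V} (adj : T.Adj x y) :
    Quotient.mk (MulAction.orbitRel H (V × V)) (x, y)
      ≠ Quotient.mk (MulAction.orbitRel H (V × V)) (y, x) := by
  intro h
  have h2 : ((x, y) : V × V) ∈ MulAction.orbit H ((y, x) : V × V) :=
    @Quotient.exact _ (MulAction.orbitRel H (V × V)) _ _ h
  obtain ⟨g, hg⟩ := MulAction.mem_orbit_iff.mp h2
  have hg1 : g • y = x := congrArg Prod.fst hg
  have hg2 : g • x = y := congrArg Prod.snd hg
  exact hcell g x y adj ⟨hg2, hg1⟩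

lemma pos_or {x y : V} (adj : T.Adj x y) : pos H x y ∨ pos H y x := by
  rcases trichotomous_of WellOrderingRel
      (Quotient.mk (MulAction.orbitRel H (V × V)) (x, y))
      (Quotient.mk (MulAction.orbitRel H (V × V)) (y, x)) with h | h | h
  · exact Or.inl h
  · exact absurd h (mkE_ne T hcell adj)
  · exact Or.inr h

lemma pos_not_both {x y : V} (adj : T.Adj x y) : ¬(pos H x y ∧ pos H y x) := by
  rintro ⟨h1, h2⟩
  exact irrefl_of WellOrderingRel _ (trans_of WellOrderingRel h1 h2)

end

/-- The groupoid structure: `Hom a b = H`, composition is multiplication. A morphism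
`h : a ⟶ b` should be thought of as the (unique) reduced path in the tree from the
chosen representative of `a` to `h • (chosen representative of b)`. -/
instance obGroupoid : Groupoid.{max uV uH, max uV uH} (Ob H V) where
  Hom _ _ := ULift.{uV} H
  id _ := ⟨1⟩
  comp f g := ⟨f.down * g.down⟩
  id_comp f := congrArg ULift.up (one_mul f.down)
  comp_id f := congrArg ULift.up (mul_one f.down)
  assoc f g h := congrArg ULift.up (mul_assoc f.down g.down h.down)
  inv f := ⟨f.down⁻¹⟩
  inv_comp f := congrArg ULift.up (inv_mul_cancel f.down)
  comp_inv f := congrArg ULift.up (mul_inv_cancel f.down)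

/-- A morphism of the groupoid with specified endpoints. -/
def mor (a b : Ob H V) (h : H) : a ⟶ b := ⟨h⟩

lemma mor_down (a b : Ob H V) (h : H) : (mor a b h).down = h := rfl

variable (T : SimpleGraph V)

/-- The generating quiver: one generator for each positively-oriented orbit of edges. -/
def Gen (a b : Ob H V) : Type (max uV uH) :=
  ULift.{uV} {h : H // T.Adj a.down.out (h • b.down.out) ∧ pos H a.down.out (h • b.down.out)}

section UniqueLift

variable (hT : T.IsTree)
variable (hact : ∀ (h : H) (u v : V), T.Adj u v → T.Adj (h • u) (h • v))
variable (hcell : ∀ (h : H) (u v : V), T.Adj u v → ¬(h • u = v ∧ h • v = u))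
variable (hfreeV : ∀ (h : H) (v : V), h • v = v → h = 1)
variable {X : Type*} [Group X] (f : ∀ a b : Ob H V, Gen T a b → X)

/-- Congruence helper for the labelling. -/
lemma f_congr {a a' b b' : Quotient (MulAction.orbitRel H V)} {h h' : H}
    (ha : a = a') (hb : b = b') (hh : h = h') (p : _) (p' : _) :
    f ⟨a⟩ ⟨b⟩ ⟨⟨h, p⟩⟩ = f ⟨a'⟩ ⟨b'⟩ ⟨⟨h', p'⟩⟩ := by
  subst ha; subst hb; subst hh; rfl

include hact in
lemma adj_smul_iff (g : H) (x y : V) : T.Adj (g • x) (g • y) ↔ T.Adj x y := by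
  constructor
  · intro h
    have := hact g⁻¹ _ _ h
    rwa [inv_smul_smul, inv_smul_smul] at this
  · exact hact g x y

/-- The labelling of oriented edges of the tree induced by a labelling of the generators. -/
def lab (x y : V) : X :=
  if hp : T.Adj x y ∧ pos H x y then
    f ⟨mkV H x⟩ ⟨mkV H y⟩ ⟨⟨tr H x * (tr H y)⁻¹, by
      constructor
      · show T.Adj (mkV H x).out ((tr H x * (tr H y)⁻¹) • (mkV H y).out)
        rw [← tr_spec x, ← tr_spec y, mul_smul, inv_smul_smul]
        exact hact (tr H x) x y hp.1
      · show pos H (mkV H x).out ((tr H x * (tr H y)⁻¹) • (mkV H y).out)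
        rw [← tr_spec x, ← tr_spec y, mul_smul, inv_smul_smul]
        exact (pos_smul (tr H x) x y).mpr hp.2⟩⟩
  else if hq : T.Adj x y then
    (f ⟨mkV H y⟩ ⟨mkV H x⟩ ⟨⟨tr H y * (tr H x)⁻¹, by
      have hyx : pos H y x := by
        rcases pos_or T hcell hq with h | h
        · exact absurd ⟨hq, h⟩ hp
        · exact h
      constructor
      · show T.Adj (mkV H y).out ((tr H y * (tr H x)⁻¹) • (mkV H x).out)
        rw [← tr_spec x, ← tr_spec y, mul_smul, inv_smul_smul]
        exact hact (tr H y) y x hq.symm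
      · show pos H (mkV H y).out ((tr H y * (tr H x)⁻¹) • (mkV H x).out)
        rw [← tr_spec x, ← tr_spec y, mul_smul, inv_smul_smul]
        exact (pos_smul (tr H y) y x).mpr hyx⟩⟩)⁻¹
  else 1

include hfreeV in
lemma lab_smul (g : H) (x y : V) :
    lab T hact hcell f (g • x) (g • y) = lab T hact hcell f x y := by
  unfold lab
  by_cases hp : T.Adj x y ∧ pos H x y
  · rw [dif_pos hp, dif_pos (by rw [adj_smul_iff T hact, pos_smul]; exact hp)]
    exact f_congr T f (mkV_smul g x) (mkV_smul g y)
      (by rw [tr_smul hfreeV, tr_smul hfreeV, mul_inv_rev, inv_inv]; group) _ _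
  · rw [dif_neg hp, dif_neg (by rw [adj_smul_iff T hact, pos_smul]; exact hp)]
    by_cases hq : T.Adj x y
    · rw [dif_pos hq, dif_pos ((adj_smul_iff T hact g x y).mpr hq)]
      rw [inv_inj]
      exact f_congr T f (mkV_smul g y) (mkV_smul g x)
        (by rw [tr_smul hfreeV, tr_smul hfreeV, mul_inv_rev, inv_inv]; group) _ _
    · rw [dif_neg hq, dif_neg (fun h => hq ((adj_smul_iff T hact g x y).mp h))]

lemma lab_rev {x y : V} (adj : T.Adj x y) :
    lab T hact hcell f y x = (lab T hact hcell f x y)⁻¹ := by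
  unfold lab
  by_cases hp : pos H x y
  · have hnp : ¬ pos H y x := fun h => pos_not_both T hcell adj ⟨hp, h⟩
    rw [dif_neg (fun h : T.Adj y x ∧ pos H y x => hnp h.2), dif_pos adj.symm,
      dif_pos ⟨adj, hp⟩]
  · have hyx : pos H y x := by
      rcases pos_or T hcell adj with h | h
      · exact absurd h hp
      · exact h
    rw [dif_pos ⟨adj.symm, hyx⟩, dif_neg (fun h : T.Adj x y ∧ pos H x y => hp h.2),
      dif_pos adj, inv_inv]

include hfreeV in
lemma lab_gen (a b : Ob H V) (e : Gen T a b) :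
    lab T hact hcell f a.down.out (e.down.val • b.down.out) = f a b e := by
  unfold lab
  rw [dif_pos ⟨e.down.prop.1, e.down.prop.2⟩]
  have h1 : mkV H a.down.out = a.down := mkV_out _
  have h2 : mkV H (e.down.val • b.down.out) = b.down := by
    rw [mkV_smul, mkV_out]
  have h3 : tr H a.down.out * (tr H (e.down.val • b.down.out))⁻¹ = e.down.val := by
    rw [tr_out hfreeV, tr_smul hfreeV, tr_out hfreeV, one_mul, one_mul, inv_inv]
  exact f_congr T f h1 h2 h3 _ _

/-- The action of a group element as a graph homomorphism. -/
def gmap (g : H) : T →g T := ⟨fun v => g • v, fun h => hact g _ _ h⟩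

/-- Product of labels along a walk (first edge rightmost). -/
def wprod : {u v : V} → T.Walk u v → X
  | _, _, SimpleGraph.Walk.nil => 1
  | _, _, @SimpleGraph.Walk.cons _ _ u x _ _ p =>
      wprod p * lab T hact hcell f u x

lemma wprod_nil (u : V) : wprod T hact hcell f (SimpleGraph.Walk.nil : T.Walk u u) = 1 := rfl

lemma wprod_cons {u x v : V} (h : T.Adj u x) (p : T.Walk x v) :
    wprod T hact hcell f (SimpleGraph.Walk.cons h p)
      = wprod T hact hcell f p * lab T hact hcell f u x := rfl

lemma wprod_append {u v w : V} (p : T.Walk u v) (q : T.Walk v w) :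
    wprod T hact hcell f (p.append q)
      = wprod T hact hcell f q * wprod T hact hcell f p := by
  induction p with
  | nil => simp [wprod_nil]
  | cons h p ih =>
      rw [SimpleGraph.Walk.cons_append, wprod_cons, wprod_cons, ih, mul_assoc]

lemma wprod_concat {u v w : V} (p : T.Walk u v) (h : T.Adj v w) :
    wprod T hact hcell f (p.concat h)
      = lab T hact hcell f v w * wprod T hact hcell f p := by
  rw [SimpleGraph.Walk.concat_eq_append, wprod_append, wprod_cons, wprod_nil, one_mul]

include hfreeV in
lemma wprod_map (g : H) {u v : V} (p : T.Walk u v) :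
    wprod T hact hcell f (p.map (gmap T hact g)) = wprod T hact hcell f p := by
  induction p with
  | nil => rfl
  | cons h p ih =>
      rw [SimpleGraph.Walk.map_cons, wprod_cons, wprod_cons, ih]
      congr 1
      exact lab_smul T hact hcell hfreeV f g _ _

/-- The chosen path between two vertices of the tree. -/
def pth (u v : V) : T.Walk u v := (hT.existsUnique_path u v).choose

lemma pth_isPath (u v : V) : (pth T hT u v).IsPath := (hT.existsUnique_path u v).choose_spec.1

lemma pth_unique {u v : V} (p : T.Walk u v) (hp : p.IsPath) : p = pth T hT u v :=
  (hT.existsUnique_path u v).choose_spec.2 p hp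

/-- Label product along the chosen path from the root. -/
def psi (r v : V) : X := wprod T hact hcell f (pth T hT r v)

lemma psi_adj (r : V) {x y : V} (adj : T.Adj x y) :
    psi T hT hact hcell f r y = lab T hact hcell f x y * psi T hT hact hcell f r x := by
  classical
  by_cases hy : y ∈ (pth T hT r x).support
  · -- then the chosen path to x passes through y and ends with the edge y-x
    have hsplit := SimpleGraph.Walk.take_spec (pth T hT r x) hy
    have hq : ((pth T hT r x).takeUntil y hy).IsPath :=
      (pth_isPath T hT r x).takeUntil hy
    have hd : ((pth T hT r x).dropUntil y hy).IsPath :=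
      (pth_isPath T hT r x).dropUntil hy
    have hedge : (SimpleGraph.Walk.cons adj.symm SimpleGraph.Walk.nil : T.Walk y x).IsPath := by
      simp [SimpleGraph.Walk.cons_isPath_iff, adj.ne']
    have hdrop : (pth T hT r x).dropUntil y hy
        = SimpleGraph.Walk.cons adj.symm SimpleGraph.Walk.nil := by
      rw [pth_unique T hT _ hd, pth_unique T hT _ hedge]
    have hx : pth T hT r x
        = ((pth T hT r x).takeUntil y hy).append
            (SimpleGraph.Walk.cons adj.symm SimpleGraph.Walk.nil) := by
      rw [← hdrop]; exact hsplit.symm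
    have htake : (pth T hT r x).takeUntil y hy = pth T hT r y :=
      pth_unique T hT _ hq
    have : psi T hT hact hcell f r x
        = lab T hact hcell f y x * psi T hT hact hcell f r y := by
      unfold psi
      rw [hx, wprod_append, wprod_cons, wprod_nil, one_mul, htake]
    rw [this, lab_rev T hact hcell f adj, ← mul_assoc, mul_inv_cancel, one_mul]
  · -- extend the chosen path to x by the edge x-y
    have hconcat : ((pth T hT r x).concat adj).IsPath := by
      rw [← SimpleGraph.Walk.isPath_reverse_iff, SimpleGraph.Walk.reverse_concat]
      refine SimpleGraph.Walk.IsPath.cons ?_ ?_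
      · rw [SimpleGraph.Walk.isPath_reverse_iff]; exact pth_isPath T hT r x
      · rwa [SimpleGraph.Walk.support_reverse, List.mem_reverse]
    have : (pth T hT r x).concat adj = pth T hT r y := pth_unique T hT _ hconcat
    unfold psi
    rw [← this, wprod_concat]

/-- The "difference" cocycle. -/
def Dd (r u v : V) : X :=
  psi T hT hact hcell f r v * (psi T hT hact hcell f r u)⁻¹

lemma Dd_eq_wprod (r : V) {u v : V} (w : T.Walk u v) :
    Dd T hT hact hcell f r u v = wprod T hact hcell f w := by
  induction w with
  | nil => exact mul_inv_cancel _
  | @cons u x v h w ih =>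
      rw [wprod_cons, ← ih]
      have := psi_adj T hT hact hcell f r h
      unfold Dd
      rw [this]
      group

include hfreeV in
lemma Dd_smul (r : V) (g : H) (u v : V) :
    Dd T hT hact hcell f r (g • u) (g • v) = Dd T hT hact hcell f r u v := by
  calc Dd T hT hact hcell f r (g • u) (g • v)
      = wprod T hact hcell f ((pth T hT u v).map (gmap T hact g)) :=
        Dd_eq_wprod T hT hact hcell f r ((pth T hT u v).map (gmap T hact g))
    _ = wprod T hact hcell f (pth T hT u v) := wprod_map T hact hcell hfreeV f g _
    _ = Dd T hT hact hcell f r u v := (Dd_eq_wprod T hT hact hcell f r (pth T hT u v)).symm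

lemma Dd_cocycle (r u v w : V) :
    Dd T hT hact hcell f r u w
      = Dd T hT hact hcell f r v w * Dd T hT hact hcell f r u v := by
  unfold Dd; group

lemma Dd_self (r u : V) : Dd T hT hact hcell f r u u = 1 := mul_inv_cancel _

lemma Dd_adj (r : V) {x y : V} (adj : T.Adj x y) :
    Dd T hT hact hcell f r x y = lab T hact hcell f x y := by
  rw [Dd_eq_wprod T hT hact hcell f r (SimpleGraph.Walk.cons adj SimpleGraph.Walk.nil),
    wprod_cons, wprod_nil, one_mul]

/-- The functor to `SingleObj X` induced by a labelling. -/
def Fct (r : V) : Ob H V ⥤ SingleObj X where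
  obj _ := ()
  map {a b} φ := Dd T hT hact hcell f r a.down.out (φ.down • b.down.out)
  map_id a := by
    show Dd T hT hact hcell f r a.down.out ((1 : H) • a.down.out) = (1 : X)
    rw [one_smul]
    exact Dd_self T hT hact hcell f r a.down.out
  map_comp {a b c} φ χ := by
    show Dd T hT hact hcell f r a.down.out ((φ.down * χ.down) • c.down.out)
        = Dd T hT hact hcell f r b.down.out (χ.down • c.down.out)
          * Dd T hT hact hcell f r a.down.out (φ.down • b.down.out)
    rw [Dd_cocycle T hT hact hcell f r a.down.out (φ.down • b.down.out)
      ((φ.down * χ.down) • c.down.out), mul_smul,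
      Dd_smul T hT hact hcell hfreeV f r φ.down b.down.out (χ.down • c.down.out)]

lemma Fct_of (r : V) (a b : Ob H V) (g : Gen T a b) :
    (Fct T hT hact hcell hfreeV f r).map (mor a b g.down.val) = f a b g := by
  show Dd T hT hact hcell f r a.down.out (g.down.val • b.down.out) = f a b g
  rw [Dd_adj T hT hact hcell f r g.down.prop.1]
  exact lab_gen T hact hcell hfreeV f a b g

include hT hact hcell hfreeV in
/-- Two functors agreeing on the generators agree everywhere. -/
lemma maps_eq (E₁ E₂ : Ob H V ⥤ SingleObj X)
    (h₁ : ∀ (a b : Ob H V) (g : Gen T a b), E₁.map (mor a b g.down.val) = f a b g)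
    (h₂ : ∀ (a b : Ob H V) (g : Gen T a b), E₂.map (mor a b g.down.val) = f a b g)
    (a b : Ob H V) (φ : a ⟶ b) : E₁.map φ = E₂.map φ := by
  classical
  -- first: the two functors agree on the "tree step" morphisms
  have step : ∀ (a : Ob H V) (y : V), T.Adj a.down.out y →
      E₁.map (mor a ⟨mkV H y⟩ (tr H y)⁻¹) = E₂.map (mor a ⟨mkV H y⟩ (tr H y)⁻¹) := by
    intro a y adj
    have hyout : ((⟨mkV H y⟩ : Ob H V)).down.out = tr H y • y := (tr_spec y).symm
    by_cases hp : pos H a.down.out y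
    · have pf : T.Adj a.down.out ((tr H y)⁻¹ • ((⟨mkV H y⟩ : Ob H V)).down.out)
          ∧ pos H a.down.out ((tr H y)⁻¹ • ((⟨mkV H y⟩ : Ob H V)).down.out) := by
        rw [hyout, inv_smul_smul]; exact ⟨adj, hp⟩
      exact (h₁ a _ ⟨⟨(tr H y)⁻¹, pf⟩⟩).trans (h₂ a _ ⟨⟨(tr H y)⁻¹, pf⟩⟩).symm
    · have hyx : pos H y a.down.out := by
        rcases pos_or T hcell adj with h | h
        · exact absurd h hp
        · exact h
      have pf : T.Adj ((⟨mkV H y⟩ : Ob H V)).down.out (tr H y • a.down.out)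
          ∧ pos H ((⟨mkV H y⟩ : Ob H V)).down.out (tr H y • a.down.out) := by
        rw [hyout]
        exact ⟨hact (tr H y) y a.down.out adj.symm, (pos_smul (tr H y) y a.down.out).mpr hyx⟩
      have key : ∀ (c : Ob H V) (t : H) (E : Ob H V ⥤ SingleObj X),
          E.map (mor a c t⁻¹) = (E.map (mor c a t) : X)⁻¹ := fun c t E => by
        rw [show mor a c t⁻¹ = CategoryTheory.inv (mor c a t) from
            IsIso.eq_inv_of_hom_inv_id (f := mor c a t) (g := mor a c t⁻¹)
              (congrArg ULift.up (mul_inv_cancel t)),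
          Functor.map_inv, SingleObj.inv_as_inv]
      exact (key ⟨mkV H y⟩ (tr H y) E₁).trans ((congrArg (fun z : X => z⁻¹)
        ((h₁ _ _ ⟨⟨tr H y, pf⟩⟩).trans (h₂ _ _ ⟨⟨tr H y, pf⟩⟩).symm)).trans (key ⟨mkV H y⟩ (tr H y) E₂).symm)
  -- main induction on the length of the chosen path
  suffices key : ∀ (n : ℕ) (a b : Ob H V) (φ : a ⟶ b)
      (w : T.Walk a.down.out (φ.down • b.down.out)), w.IsPath → w.length = n →
      E₁.map φ = E₂.map φ by
    exact key _ a b φ (pth T hT _ _) (pth_isPath T hT _ _) rfl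
  intro n
  induction n using Nat.strong_induction_on with
  | _ n IH =>
    intro a b φ w hw hlen
    by_cases huv : a.down.out = φ.down • b.down.out
    · have hab : a = b := by
        have : a.down = b.down := by
          rw [← mkV_out a.down, ← mkV_out b.down]
          rw [show (a.down.out : V) = φ.down • b.down.out from huv, mkV_smul]
        cases a; cases b; cases this; rfl
      subst hab
      have hφ1 : φ.down = 1 := hfreeV φ.down a.down.out huv.symm
      have hφ : φ = 𝟙 a := by
        show φ = ULift.up (1 : H)
        rw [← hφ1]
        rfl
      rw [hφ, CategoryTheory.Functor.map_id, CategoryTheory.Functor.map_id]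
      rfl
    · obtain ⟨y, adj, w', rfl⟩ := SimpleGraph.Walk.exists_eq_cons_of_ne huv w
      set c : Ob H V := ⟨mkV H y⟩ with hc
      have hφ : φ = mor a c (tr H y)⁻¹ ≫ mor c b (tr H y * φ.down) := by
        show φ = ULift.up ((tr H y)⁻¹ * (tr H y * φ.down))
        rw [inv_mul_cancel_left]
        rfl
      have he := step a y adj
      have hχ : E₁.map (mor c b (tr H y * φ.down)) = E₂.map (mor c b (tr H y * φ.down)) := by
        have hlen' : w'.length < n := by
          rw [← hlen, SimpleGraph.Walk.length_cons]; omega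
        refine IH w'.length hlen' c b (mor c b (tr H y * φ.down))
          (((w'.map (gmap T hact (tr H y))).copy (tr_spec y) ?_)) ?_ ?_
        · show tr H y • (φ.down • b.down.out) = (tr H y * φ.down) • b.down.out
          rw [mul_smul]
        · exact (SimpleGraph.Walk.isPath_copy _ _ _).mpr
            (SimpleGraph.Walk.map_isPath_of_injective (MulAction.injective (tr H y)) hw.of_cons)
        · exact (SimpleGraph.Walk.length_copy _ _ _).trans (SimpleGraph.Walk.length_map _ _)
      rw [hφ, Functor.map_comp, Functor.map_comp, he, hχ]

/-- The quotient groupoid is free on the positively-oriented edge orbits. -/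
def freeGroupoid : IsFreeGroupoid (Ob H V) where
  quiverGenerators := ⟨fun a b => Gen T a b⟩
  of := fun e => ⟨e.down.val⟩
  unique_lift := by
    intro X _ f
    have hV : Nonempty V := hT.isConnected.nonempty
    let r : V := Classical.arbitrary V
    refine ⟨Fct T hT hact hcell hfreeV f r, fun a b g => Fct_of T hT hact hcell hfreeV f r a b g,
      ?_⟩
    intro E hE
    have := maps_eq T hT hact hcell hfreeV f E (Fct T hT hact hcell hfreeV f r) hE
      (fun a b g => Fct_of T hT hact hcell hfreeV f r a b g)
    refine CategoryTheory.Functor.ext (fun a => rfl) ?_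
    intro a b φ
    rw [this a b φ]
    simp

end UniqueLift

end Stmt5

end Stmt5Aux

/-- If a group `H` acts on a (nonempty) tree by graph
automorphisms, without edge inversions, and the action is free on vertices and
edges (only the identity fixes a vertex, and only the identity fixes an edge),
then `H` is a free group. -/
theorem stmt5 (H : Type*) [Group H] (V : Type*) [MulAction H V]
    (T : SimpleGraph V) (hT : T.IsTree)
    (hact : ∀ (h : H) (u v : V), T.Adj u v → T.Adj (h • u) (h • v))
    (hcell : ∀ (h : H) (u v : V), T.Adj u v → ¬(h • u = v ∧ h • v = u))
    (hfreeV : ∀ (h : H) (v : V), h • v = v → h = 1)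
    (hfreeE : ∀ (h : H) (u v : V), T.Adj u v →
      (h • u = u ∧ h • v = v) ∨ (h • u = v ∧ h • v = u) → h = 1) :
    IsFreeGroup H := by
  classical
  have hV : Nonempty V := hT.isConnected.nonempty
  letI : IsFreeGroupoid (Stmt5.Ob H V) := Stmt5.freeGroupoid T hT hact hcell hfreeV
  haveI : Nonempty (Stmt5.Ob H V) := ⟨⟨Stmt5.mkV H (Classical.arbitrary V)⟩⟩
  haveI : CategoryTheory.IsConnected (Stmt5.Ob H V) := by
    apply CategoryTheory.zigzag_isConnected
    intro a b
    exact Relation.ReflTransGen.single (Or.inl ⟨Stmt5.mor a b 1⟩)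
  let r : Stmt5.Ob H V := ⟨Stmt5.mkV H (Classical.arbitrary V)⟩
  haveI : IsFreeGroup (CategoryTheory.End r) := IsFreeGroupoid.endIsFreeOfConnectedFree r
  refine IsFreeGroup.ofMulEquiv
    (G := CategoryTheory.End r)
    { toFun := fun x => x.down⁻¹
      invFun := fun h => ⟨h⁻¹⟩
      left_inv := fun x => by
        show ULift.up x.down⁻¹⁻¹ = x
        rw [inv_inv]
        rfl
      right_inv := fun h => by
        show h⁻¹⁻¹ = h
        rw [inv_inv]
      map_mul' := fun x y => by
        show (y.down * x.down)⁻¹ = x.down⁻¹ * y.down⁻¹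
        rw [mul_inv_rev] }
end

section
/- Let G be a finite group with Sylow p-subgroup S and let P ≤ S be such that N_S(P) is a Sylow p-subgroup of N_G(P). Then C_S(P) is a Sylow p-subgroup of C_G(P), and N_S(P)/C_S(P) is a Sylow p-subgroup of N_G(P)/C_G(P). -/
/-!
`C_G(P)` is the kernel of the conjugation action of `N_G(P)` on `P`, hence normal in `N_G(P)`.
For a normal subgroup `C` of `N`, the second isomorphism theorem gives `[C : Q ∩ C] ∣ [N : Q]`;
with `Q = N_S(P)` of index prime to `p` this makes `C_S(P) = Q ∩ C` Sylow in `C_G(P)`.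
The image of the Sylow subgroup `N_S(P)` under the surjection `N_G(P) → Aut_G(P)` is Sylow.
-/

namespace Subgroup

variable {G : Type*} [Group G]

/-- Index form of the second isomorphism theorem, `[HN : H] = [N : H ∩ N]`. -/
theorem relIndex_sup_of_normal_right [Finite G] (H N : Subgroup G) [N.Normal] :
    H.relIndex (H ⊔ N) = H.relIndex N := by
  have hne : (H ⊓ N).relIndex H ≠ 0 := index_ne_zero_of_finite
  have hN : N.relIndex (H ⊔ N) = (H ⊓ N).relIndex H := by
    rw [relIndex_sup_right, ← inf_relIndex_right N H, inf_comm]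
  refine (Nat.eq_of_mul_eq_mul_left (Nat.pos_of_ne_zero hne) ?_).trans (inf_relIndex_right H N)
  rw [relIndex_mul_relIndex _ _ _ inf_le_left le_sup_left, ← hN, mul_comm,
    relIndex_mul_relIndex _ _ _ inf_le_right le_sup_right]

theorem relIndex_dvd_index_of_normal_right [Finite G] (H N : Subgroup G) [N.Normal] :
    H.relIndex N ∣ H.index :=
  relIndex_sup_of_normal_right H N ▸ relIndex_dvd_index_of_le le_sup_left

theorem relIndex_dvd_relIndex_of_normal_subgroupOf [Finite G] (A : Subgroup G)
    {C N : Subgroup G} (hCN : C ≤ N) [(C.subgroupOf N).Normal] :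
    A.relIndex C ∣ A.relIndex N := by
  rw [← relIndex_subgroupOf hCN]
  exact relIndex_dvd_index_of_normal_right _ _

end Subgroup

theorem MonoidHom.map_rangeRestrict {G H : Type*} [Group G] [Group H] (f : G →* H)
    (K : Subgroup G) : K.map f.rangeRestrict = (K.map f).subgroupOf f.range := by
  apply Subgroup.map_injective f.range.subtype_injective
  rw [Subgroup.map_map, f.subtype_comp_rangeRestrict, Subgroup.subgroupOf_map_subtype,
    inf_eq_left.mpr (Subgroup.map_le_range f K)]

theorem stmt13_general (p : ℕ) [Fact p.Prime] (G : Type*) [Group G] [Fintype G]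
    (S : Sylow p G) (P : Subgroup G)
    (hNS : ∃ T : Sylow p ↥(Subgroup.normalizer (P : Set G)),
      (T : Subgroup ↥(Subgroup.normalizer (P : Set G))) =
        ((S : Subgroup G) ⊓ Subgroup.normalizer (P : Set G)).subgroupOf (Subgroup.normalizer (P : Set G))) :
    (∃ T : Sylow p ↥(Subgroup.centralizer (P : Set G)),
      (T : Subgroup ↥(Subgroup.centralizer (P : Set G))) =
        ((S : Subgroup G) ⊓ Subgroup.centralizer (P : Set G)).subgroupOf
          (Subgroup.centralizer (P : Set G))) ∧
    (∃ T : Sylow p ↥(P.normalizerMonoidHom.range),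
      (T : Subgroup ↥(P.normalizerMonoidHom.range)) =
        (Subgroup.map P.normalizerMonoidHom
          (((S : Subgroup G) ⊓ Subgroup.normalizer (P : Set G)).subgroupOf (Subgroup.normalizer (P : Set G)))).subgroupOf
            P.normalizerMonoidHom.range) := by
  obtain ⟨T, hT⟩ := hNS
  refine ⟨?_, T.mapSurjective P.normalizerMonoidHom.rangeRestrict_surjective, ?_⟩
  · have hpgroup : IsPGroup p
        (((S : Subgroup G) ⊓ Subgroup.centralizer P).subgroupOf (Subgroup.centralizer P)) :=
      S.isPGroup'.to_inf_left.of_equiv (Subgroup.subgroupOfEquivOfLe inf_le_right).symm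
    have hindex : ((S : Subgroup G) ⊓ Subgroup.centralizer P).relIndex (Subgroup.centralizer P) ∣
        T.index := by
      rw [hT]
      simp only [← Subgroup.relIndex.eq_def, Subgroup.inf_relIndex_right]
      exact Subgroup.relIndex_dvd_relIndex_of_normal_subgroupOf _
        (Subgroup.centralizer_le_normalizer _)
    have hcoprime : ¬ p ∣
        (((S : Subgroup G) ⊓ Subgroup.centralizer P).subgroupOf (Subgroup.centralizer P)).index :=
      fun hp ↦ T.not_dvd_index (hp.trans hindex)
    exact ⟨hpgroup.toSylow hcoprime, hpgroup.toSylow_coe hcoprime⟩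
  · rw [Sylow.coe_mapSurjective, hT, MonoidHom.map_rangeRestrict]

/-- Let `G` be a finite group with Sylow `p`-subgroup `S`, and
`P ≤ S` a subgroup such that `N_S(P)` is a Sylow `p`-subgroup of `N_G(P)`.
Then `C_S(P)` is a Sylow `p`-subgroup of `C_G(P)`, and
`Aut_S(P) = N_S(P)/C_S(P)` is a Sylow `p`-subgroup of
`Aut_G(P) = N_G(P)/C_G(P)` (realised as groups of automorphisms of `P`
induced by conjugation). -/
theorem stmt13 (p : ℕ) [Fact p.Prime] (G : Type*) [Group G] [Fintype G]
    (S : Sylow p G) (P : Subgroup G) (hP : P ≤ S)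
    (hNS : ∃ T : Sylow p ↥(Subgroup.normalizer (P : Set G)),
      (T : Subgroup ↥(Subgroup.normalizer (P : Set G))) =
        ((S : Subgroup G) ⊓ Subgroup.normalizer (P : Set G)).subgroupOf (Subgroup.normalizer (P : Set G))) :
    (∃ T : Sylow p ↥(Subgroup.centralizer (P : Set G)),
      (T : Subgroup ↥(Subgroup.centralizer (P : Set G))) =
        ((S : Subgroup G) ⊓ Subgroup.centralizer (P : Set G)).subgroupOf
          (Subgroup.centralizer (P : Set G))) ∧
    (∃ T : Sylow p ↥(P.normalizerMonoidHom.range),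
      (T : Subgroup ↥(P.normalizerMonoidHom.range)) =
        (Subgroup.map P.normalizerMonoidHom
          (((S : Subgroup G) ⊓ Subgroup.normalizer (P : Set G)).subgroupOf (Subgroup.normalizer (P : Set G)))).subgroupOf
            P.normalizerMonoidHom.range) :=
  stmt13_general p G S P hNS
end

section
/- Let p be an odd prime, A = (C_p)^3, B ≤ Aut(A) of order p acting by a single Jordan block, S = A ⋊ B, Z = Z(S), and E = Z × B ≤ S. Then C_S(E) = E, and N_S(E) is a nonabelian group of order p^3 and exponent p. -/
/-!
Write `f a = b a / a` (that is, `b - 1` in additive notation; in `S` it is the commutator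
`[b, a]`). Since `b ^ p = 1` in characteristic `p`, `f` is a nilpotent endomorphism of the
three-dimensional `𝔽_p`-space `A`. A vector of `ker f` outside `range f` would split off, with any
complement containing `range f` as an invariant complement, so indecomposability forces
`ker f ≤ range f`; hence `|ker f| = p` and `|ker f²| = p²`.

In `S = A ⋊ ⟨b⟩` one computes `E = Z(S)⟨b⟩ = ker f ⋊ ⟨b⟩`, which is abelian and self-centralizing,
and `N_S(E) = ker f² ⋊ ⟨b⟩`, of order `p³`; it is nonabelian because `b` moves the elements of
`ker f² \ ker f`. For `x = (a, t) ∈ N_S(E)` one has `t a = a * h` with `h ∈ ker f`, so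
`x ^ p = (a ^ p * h ^ (p.choose 2), t ^ p) = 1` as `p` is odd.
-/

open Module LinearMap

def Module.End.IsIndecomposable {R M : Type*} [Semiring R] [AddCommMonoid M] [Module R M]
    (ν : Module.End R M) : Prop :=
  ∀ U W : Submodule R M, IsCompl U W → U ∈ ν.invtSubmodule → W ∈ ν.invtSubmodule →
    U = ⊥ ∨ W = ⊥

section LinearAlgebra

variable {K V : Type*} [Field K] [AddCommGroup V] [Module K V]

theorem exists_invtSubmodule_isCompl_span_singleton (ν : Module.End K V) {w : V}
    (hw : w ∉ range ν) :
    ∃ W ∈ ν.invtSubmodule, IsCompl W (K ∙ w) := by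
  obtain ⟨W, hle, hW⟩ := (Submodule.disjoint_span_singleton_of_notMem hw).exists_isCompl
  exact ⟨W, fun x _ => hle (mem_range_self ν x), hW⟩

theorem Module.End.IsIndecomposable.ker_le_range {ν : Module.End K V} (hind : ν.IsIndecomposable)
    (hV : 1 < finrank K V) :
    ker ν ≤ range ν := by
  intro w hwker
  by_contra hw
  obtain ⟨W, hWinv, hWc⟩ := exists_invtSubmodule_isCompl_span_singleton ν hw
  have hw0 : w ≠ 0 := fun h => hw (h ▸ zero_mem _)
  have hwinv : (K ∙ w) ∈ ν.invtSubmodule := by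
    rw [Module.End.mem_invtSubmodule, Submodule.span_singleton_le_iff_mem, Submodule.mem_comap,
      mem_ker.1 hwker]
    exact zero_mem _
  rcases hind W _ hWc hWinv hwinv with hW | hw'
  · have : FiniteDimensional K V := Module.finite_of_finrank_pos (by omega)
    have htop : (K ∙ w) = ⊤ := by simpa [hW] using hWc.sup_eq_top
    have := finrank_span_singleton (K := K) hw0
    rw [htop, finrank_top] at this
    omega
  · exact hw0 (by simpa [Submodule.span_singleton_eq_bot] using hw')

theorem finrank_ker_mul_self [FiniteDimensional K V] (ν : Module.End K V) :
    finrank K (ker (ν * ν)) = finrank K (ker ν) + finrank K (ker ν ⊓ range ν : Submodule K V) := by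
  have hker : ker ν ≤ ker (ν * ν) := fun x hx => by simp [mem_ker.1 hx]
  have hrange : range (ν.domRestrict (ker (ν * ν))) = ker ν ⊓ range ν := by
    rw [range_domRestrict, Module.End.mul_eq_comp, ker_comp, Submodule.map_comap_eq, inf_comm]
  have := finrank_range_add_finrank_ker (ν.domRestrict (ker (ν * ν)))
  rw [hrange, ker_domRestrict, (Submodule.comapSubtypeEquivOfLe hker).finrank_eq] at this
  omega

theorem Module.End.IsIndecomposable.finrank_ker_of_finrank_eq_three {ν : Module.End K V}
    (hind : ν.IsIndecomposable) (hnil : IsNilpotent ν) (hV : finrank K V = 3) :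
    finrank K (ker ν) = 1 ∧ finrank K (ker (ν * ν)) = 2 := by
  have : FiniteDimensional K V := Module.finite_of_finrank_pos (by omega)
  have : Nontrivial V := Module.nontrivial_of_finrank_pos (R := K) (by omega)
  have hle := hind.ker_le_range (by omega)
  have hpos : 0 < finrank K (ker ν) := Submodule.one_le_finrank_iff.2 fun h =>
    hnil.not_isUnit ((LinearMap.isUnit_iff_ker_eq_bot ν).2 h)
  have hmono := Submodule.finrank_mono hle
  have := finrank_range_add_finrank_ker ν
  have := finrank_ker_mul_self ν
  rw [inf_eq_left.2 hle] at this
  omega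

end LinearAlgebra

namespace SemidirectProduct

variable {N G : Type*} [Group N] [Group G] {φ : G →* MulAut N}

def leftPreimage (K : Subgroup N) (hK : ∀ g : G, ∀ n ∈ K, φ g n ∈ K) : Subgroup (N ⋊[φ] G) where
  carrier := {x | x.left ∈ K}
  one_mem' := K.one_mem
  mul_mem' hx hy := K.mul_mem hx (hK _ _ hy)
  inv_mem' hx := hK _ _ (K.inv_mem hx)

@[simp]
theorem mem_leftPreimage {K : Subgroup N} {hK : ∀ g : G, ∀ n ∈ K, φ g n ∈ K} {x : N ⋊[φ] G} :
    x ∈ leftPreimage K hK ↔ x.left ∈ K :=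
  Iff.rfl

theorem card_leftPreimage (K : Subgroup N) (hK : ∀ g : G, ∀ n ∈ K, φ g n ∈ K) :
    Nat.card (leftPreimage K hK) = Nat.card K * Nat.card G := by
  rw [← Nat.card_prod]
  exact Nat.card_congr
    { toFun := fun x => (⟨x.1.left, x.2⟩, x.1.right)
      invFun := fun y => ⟨⟨y.1, y.2⟩, y.1.2⟩
      left_inv := fun _ => rfl
      right_inv := fun _ => rfl }

theorem conj_left_of_commute {x y : N ⋊[φ] G} (h : Commute x.right y.right) :
    (x * y * x⁻¹).left = x.left * φ x.right y.left * (φ y.right x.left)⁻¹ := by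
  rw [mul_left, mul_left, mul_right, inv_left, ← MulAut.mul_apply, ← map_mul, h.eq,
    mul_inv_cancel_right, map_inv]

theorem apply_left_eq_of_commute_inr {x : N ⋊[φ] G} {g : G} (h : Commute x (inr g)) :
    φ g x.left = x.left := by
  simpa using congrArg left h.eq.symm

theorem inl_mem_center {N : Type*} [CommGroup N] {φ : G →* MulAut N} {n : N}
    (hn : ∀ g, φ g n = n) : (inl n : N ⋊[φ] G) ∈ Subgroup.center (N ⋊[φ] G) :=
  Subgroup.mem_center_iff.2 fun x => by
    ext
    · simp [hn, mul_comm]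
    · simp

theorem pow_eq_of_apply_left_eq_mul {N : Type*} [CommGroup N] {φ : G →* MulAut N}
    (x : N ⋊[φ] G) {h : N} (hx : φ x.right x.left = x.left * h) (hh : φ x.right h = h) (n : ℕ) :
    x ^ n = ⟨x.left ^ n * h ^ n.choose 2, x.right ^ n⟩ := by
  have hpow : ∀ m : ℕ, φ (x.right ^ m) x.left = x.left * h ^ m := by
    intro m
    induction m with
    | zero => simp
    | succ m ih =>
      rw [pow_succ', map_mul, MulAut.mul_apply, ih, map_mul, map_pow, hx, hh, pow_succ', mul_assoc]
  induction n with
  | zero => ext <;> simp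
  | succ n ih =>
    rw [pow_succ, ih]
    ext
    · dsimp only [mul_left]
      rw [hpow, Nat.choose_succ_succ', Nat.choose_one_right, pow_succ, pow_add]
      ac_rfl
    · dsimp only [mul_right]
      rw [pow_succ]

end SemidirectProduct

theorem sub_one_pow_char {R A : Type*} [CommRing R] (p : ℕ) [Fact p.Prime] [CharP R p] [Ring A]
    [Algebra R A] (a : A) : (a - 1) ^ p = a ^ p - 1 := by
  simpa using congrArg (Polynomial.aeval (R := R) a)
    (sub_pow_char (p := p) (Polynomial.X : Polynomial R) 1)

theorem apply_mem_ker_of_commute {M : Type*} [Group M] {g : M →* M} {t : MulAut M}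
    (hg : ∀ a, g (t a) = t (g a)) {a : M} (ha : a ∈ g.ker) : t a ∈ g.ker := by
  rw [MonoidHom.mem_ker, hg, MonoidHom.mem_ker.1 ha, map_one]

section ZPowers

open SemidirectProduct

variable {A : Type*} [CommGroup A] (b : MulAut A)

local notation "S" => A ⋊[Subgroup.subtype (Subgroup.zpowers b)] Subgroup.zpowers b

def commMap : A →* A := b.toMonoidHom / MonoidHom.id A

@[simp]
theorem commMap_apply (a : A) : commMap b a = b a / a := rfl

variable {b}

theorem apply_eq_of_mem_zpowers {a : A} (ha : b a = a) {t : MulAut A}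
    (ht : t ∈ Subgroup.zpowers b) : t a = a :=
  (Subgroup.zpowers_le (H := MulAction.stabilizer (MulAut A) a)).2 ha ht

theorem commMap_apply_apply {t : MulAut A} (ht : t ∈ Subgroup.zpowers b) (a : A) :
    commMap b (t a) = t (commMap b a) := by
  obtain ⟨k, rfl⟩ := Subgroup.mem_zpowers_iff.1 ht
  rw [commMap_apply, commMap_apply, map_div, ← MulAut.mul_apply,
    ((Commute.refl b).zpow_right k).eq, MulAut.mul_apply]

variable (b)

def fixedLeft : Subgroup S :=
  leftPreimage (commMap b).ker fun t _ =>
    apply_mem_ker_of_commute (t := (Subgroup.zpowers b).subtype t) (commMap_apply_apply t.2)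

def ker2Left : Subgroup S :=
  leftPreimage ((commMap b).comp (commMap b)).ker fun t _ =>
    apply_mem_ker_of_commute (t := (Subgroup.zpowers b).subtype t) fun a => by
      simp only [MonoidHom.comp_apply, Subgroup.subtype_apply, commMap_apply_apply t.2]

variable {b}

theorem mem_fixedLeft {x : S} : x ∈ fixedLeft b ↔ b x.left = x.left := by
  rw [fixedLeft, mem_leftPreimage, MonoidHom.mem_ker, commMap_apply, div_eq_one]

theorem mem_ker2Left {x : S} : x ∈ ker2Left b ↔ commMap b (commMap b x.left) = 1 := Iff.rfl

theorem inr_mem_fixedLeft (t : Subgroup.zpowers b) : (inr t : S) ∈ fixedLeft b := by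
  simp [mem_fixedLeft]

theorem center_sup_range_inr :
    Subgroup.center S ⊔ (inr : Subgroup.zpowers b →* S).range = fixedLeft b := by
  refine le_antisymm (sup_le (fun z hz => ?_) ?_) fun x hx => ?_
  · exact mem_fixedLeft.2 <| apply_left_eq_of_commute_inr <|
      (Subgroup.mem_center_iff.1 hz (inr ⟨b, Subgroup.mem_zpowers b⟩)).symm
  · rintro _ ⟨t, rfl⟩
    exact inr_mem_fixedLeft t
  · rw [← inl_left_mul_inr_right x]
    refine mul_mem (Subgroup.mem_sup_left (inl_mem_center fun t => ?_))
      (Subgroup.mem_sup_right ⟨x.right, rfl⟩)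
    exact apply_eq_of_mem_zpowers (mem_fixedLeft.1 hx) t.2

theorem centralizer_fixedLeft : Subgroup.centralizer (fixedLeft b : Set S) = fixedLeft b := by
  refine le_antisymm (fun x hx => ?_) fun x hx => Subgroup.mem_centralizer_iff.2 fun y hy => ?_
  · exact mem_fixedLeft.2 <| apply_left_eq_of_commute_inr <|
      (Subgroup.mem_centralizer_iff.1 hx _ (inr_mem_fixedLeft ⟨b, Subgroup.mem_zpowers b⟩)).symm
  · ext
    · simp only [mul_left, Subgroup.subtype_apply,
        apply_eq_of_mem_zpowers (mem_fixedLeft.1 hx) y.right.2,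
        apply_eq_of_mem_zpowers (mem_fixedLeft.1 (SetLike.mem_coe.1 hy)) x.right.2, mul_comm]
    · simp only [mul_right, mul_comm']

theorem commMap_conj_left {x : S} (hx : x ∈ ker2Left b) (y : S) :
    commMap b (x * y * x⁻¹).left = x.right.1 (commMap b y.left) := by
  have hfix : y.right.1 (commMap b x.left) = commMap b x.left :=
    apply_eq_of_mem_zpowers (by simpa [div_eq_one] using mem_ker2Left.1 hx) y.right.2
  rw [conj_left_of_commute (mul_comm' _ _), map_mul, map_mul, map_inv, Subgroup.subtype_apply,
    Subgroup.subtype_apply, commMap_apply_apply x.right.2, commMap_apply_apply y.right.2, hfix,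
    mul_inv_cancel_comm]

theorem normalizer_fixedLeft : Subgroup.normalizer (fixedLeft b : Set S) = ker2Left b := by
  ext x
  rw [Subgroup.mem_normalizer_iff]
  refine ⟨fun hx => ?_, fun hx y => ?_⟩
  · have h := (hx _).1 (inr_mem_fixedLeft ⟨b, Subgroup.mem_zpowers b⟩)
    rw [fixedLeft, mem_leftPreimage, MonoidHom.mem_ker, conj_left_of_commute (mul_comm' _ _)] at h
    simp only [left_inr, right_inr, map_one, mul_one, Subgroup.subtype_apply] at h
    rwa [← div_eq_mul_inv, ← inv_div, ← commMap_apply, map_inv, inv_eq_one] at h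
  · simp only [fixedLeft, mem_leftPreimage, MonoidHom.mem_ker, commMap_conj_left hx,
      MulEquiv.map_eq_one_iff]

theorem card_ker2Left :
    Nat.card (ker2Left b) = Nat.card ((commMap b).comp (commMap b)).ker * orderOf b := by
  rw [ker2Left, card_leftPreimage, Nat.card_zpowers]

theorem not_mul_comm_ker2Left (h : ¬((commMap b).comp (commMap b)).ker ≤ (commMap b).ker) :
    ¬∀ x y : ker2Left b, x * y = y * x := by
  intro hcomm
  obtain ⟨a, ha2, ha1⟩ := SetLike.not_le_iff_exists.1 h
  have := congrArg (fun z : ker2Left b => z.1.left)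
    (hcomm ⟨inl a, ha2⟩ ⟨inr ⟨b, Subgroup.mem_zpowers b⟩, by simp [mem_ker2Left]⟩)
  simp only [Subgroup.coe_mul, mul_left, left_inl, left_inr, right_inl, right_inr, map_one,
    one_mul, mul_one, Subgroup.subtype_apply] at this
  exact ha1 (by rw [MonoidHom.mem_ker, commMap_apply, ← this, div_self'])

theorem pow_prime_eq_one_of_mem_ker2Left {p : ℕ} (hp : p.Prime) (hodd : Odd p)
    (hexp : ∀ a : A, a ^ p = 1) (hb : orderOf b = p) {x : S} (hx : x ∈ ker2Left b) :
    x ^ p = 1 := by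
  set t := x.right.1
  set h := t x.left / x.left
  have hfix : ∀ {a : A}, commMap b a = 1 → t a = a := fun ha =>
    apply_eq_of_mem_zpowers (div_eq_one.1 ha) x.right.2
  have hh : commMap b h = 1 := by
    rw [map_div, commMap_apply_apply x.right.2, hfix hx, div_self']
  obtain ⟨c, hc⟩ : p ∣ p.choose 2 :=
    hp.dvd_choose_self two_ne_zero (hp.two_le.lt_of_ne (by rintro rfl; norm_num at hodd))
  rw [pow_eq_of_apply_left_eq_mul x (mul_div_cancel _ _).symm (hfix hh), hc, pow_mul, hexp, hexp,
    one_pow, mul_one]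
  refine SemidirectProduct.ext rfl ?_
  show x.right ^ p = 1
  rw [← hb, ← Nat.card_zpowers]
  exact pow_card_eq_one'

end ZPowers

section AsZModModule

theorem isIndecomposable_toZModLinearMap_commMap {p : ℕ} {A : Type*} [CommGroup A]
    [Module (ZMod p) (Additive A)] {b : MulAut A}
    (hindec : ¬∃ U V : Subgroup A,
      (∀ a ∈ U, b a ∈ U) ∧ (∀ a ∈ V, b a ∈ V) ∧ U ≠ ⊥ ∧ V ≠ ⊥ ∧ U ⊓ V = ⊥ ∧ U ⊔ V = ⊤) :
    Module.End.IsIndecomposable ((commMap b).toAdditive.toZModLinearMap p) := by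
  intro U W hUW hU hW
  let e : Submodule (ZMod p) (Additive A) ≃o Subgroup A :=
    (AddSubgroup.toZModSubmodule p).symm.trans Subgroup.toAddSubgroup.symm
  have he : ∀ U ∈ Module.End.invtSubmodule ((commMap b).toAdditive.toZModLinearMap p), ∀ a ∈ e U,
      b a ∈ e U := fun U hU a ha =>
    div_mul_cancel (b a) a ▸ U.add_mem (hU ha) ha
  refine or_iff_not_and_not.2 fun h => hindec ⟨e U, e W, he U hU, he W hW,
    (map_eq_bot_iff e).not.2 h.1, (map_eq_bot_iff e).not.2 h.2, (e.isCompl hUW).inf_eq_bot,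
    (e.isCompl hUW).sup_eq_top⟩

theorem card_ker_commMap {p : ℕ} (hp : p.Prime) {A : Type*} [CommGroup A]
    (hcard : Nat.card A = p ^ 3) (hexp : ∀ a : A, a ^ p = 1) {b : MulAut A} (hbp : b ^ p = 1)
    (hindec : ¬∃ U V : Subgroup A,
      (∀ a ∈ U, b a ∈ U) ∧ (∀ a ∈ V, b a ∈ V) ∧ U ≠ ⊥ ∧ V ≠ ⊥ ∧ U ⊓ V = ⊥ ∧ U ⊔ V = ⊤) :
    Nat.card (commMap b).ker = p ∧ Nat.card ((commMap b).comp (commMap b)).ker = p ^ 2 := by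
  have := Fact.mk hp
  have : Finite A := Nat.finite_of_card_ne_zero (by simp [hcard, hp.ne_zero])
  let _ : Module (ZMod p) (Additive A) := AddCommGroup.zmodModule (n := p) fun x => hexp x.toMul
  let β : Module.End (ZMod p) (Additive A) := b.toMonoidHom.toAdditive.toZModLinearMap p
  have hβ : ∀ n : ℕ, (β ^ n : Module.End (ZMod p) (Additive A)) =
      (b ^ n).toMonoidHom.toAdditive.toZModLinearMap p := by
    intro n
    induction n with
    | zero => rfl
    | succ n ih => rw [pow_succ, ih, pow_succ]; rfl
  let ν : Module.End (ZMod p) (Additive A) := (commMap b).toAdditive.toZModLinearMap p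
  have hnil : IsNilpotent ν := by
    refine ⟨p, ?_⟩
    rw [show ν = β - 1 from rfl, sub_one_pow_char (R := ZMod p), hβ, hbp]
    exact sub_self _
  have hcard_sub : ∀ W : Submodule (ZMod p) (Additive A), Nat.card W = p ^ finrank (ZMod p) W :=
    fun W => by rw [Module.natCard_eq_pow_finrank (K := ZMod p), Nat.card_zmod]
  have hfin : finrank (ZMod p) (Additive A) = 3 := by
    have := Module.natCard_eq_pow_finrank (K := ZMod p) (V := Additive A)
    rw [Nat.card_zmod, show Nat.card (Additive A) = Nat.card A from rfl, hcard] at this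
    exact (Nat.pow_right_injective hp.two_le this).symm
  obtain ⟨h1, h2⟩ :=
    (isIndecomposable_toZModLinearMap_commMap hindec).finrank_ker_of_finrank_eq_three hnil hfin
  exact ⟨(hcard_sub (ker ν)).trans (by rw [h1, pow_one]),
    (hcard_sub (ker (ν * ν))).trans (by rw [h2])⟩

end AsZModModule

theorem stmt17_general (p : ℕ) (hp : p.Prime) (hodd : Odd p)
    (A : Type*) [CommGroup A]
    (hcard : Nat.card A = p ^ 3) (hexp : ∀ a : A, a ^ p = 1)
    (b : MulAut A) (hb : orderOf b = p)
    (hindec : ¬∃ U V : Subgroup A,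
      (∀ a ∈ U, b a ∈ U) ∧ (∀ a ∈ V, b a ∈ V) ∧
      U ≠ ⊥ ∧ V ≠ ⊥ ∧ U ⊓ V = ⊥ ∧ U ⊔ V = ⊤) :
    letI S := A ⋊[(Subgroup.zpowers b).subtype] ↥(Subgroup.zpowers b)
    letI E : Subgroup S :=
      Subgroup.center S ⊔
        (SemidirectProduct.inr : ↥(Subgroup.zpowers b) →* S).range
    Subgroup.centralizer (E : Set S) = E ∧
    Nat.card ↥(Subgroup.normalizer (E : Set S)) = p ^ 3 ∧
    (¬∀ x y : ↥(Subgroup.normalizer (E : Set S)), x * y = y * x) ∧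
    (∀ x : ↥(Subgroup.normalizer (E : Set S)), x ^ p = 1) := by
  obtain ⟨hK1, hK2⟩ := card_ker_commMap hp hcard hexp (hb ▸ pow_orderOf_eq_one b) hindec
  have : Finite (commMap b).ker := Nat.finite_of_card_ne_zero (hK1 ▸ hp.ne_zero)
  have hlt : ¬((commMap b).comp (commMap b)).ker ≤ (commMap b).ker := fun hle => by
    have := Subgroup.card_le_of_le hle
    rw [hK1, hK2] at this
    exact this.not_gt (lt_self_pow₀ hp.one_lt one_lt_two)
  rw [center_sup_range_inr, centralizer_fixedLeft, normalizer_fixedLeft]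
  refine ⟨rfl, by rw [card_ker2Left, hK2, hb, ← pow_succ], not_mul_comm_ker2Left hlt, fun x => ?_⟩
  exact Subtype.ext (pow_prime_eq_one_of_mem_ker2Left hp hodd hexp hb x.2)

/-- With `p` an odd prime, `A = (C_p)^3`, `B = ⟨b⟩ ≤ Aut(A)` of
order `p` acting by a single Jordan block (so `A` is an indecomposable
`B`-module), `S = A ⋊ B`, `Z = Z(S)` and `E = Z × B ≤ S` (the subgroup
generated by the center and the complement `B`), one has `C_S(E) = E`, and
`N_S(E)` is a nonabelian group of order `p^3` and exponent `p`. -/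
theorem stmt17 (p : ℕ) (hp : p.Prime) (hodd : Odd p)
    (A : Type*) [CommGroup A] [Fintype A]
    (hcard : Nat.card A = p ^ 3) (hexp : ∀ a : A, a ^ p = 1)
    (b : MulAut A) (hb : orderOf b = p)
    (hindec : ¬∃ U V : Subgroup A,
      (∀ a ∈ U, b a ∈ U) ∧ (∀ a ∈ V, b a ∈ V) ∧
      U ≠ ⊥ ∧ V ≠ ⊥ ∧ U ⊓ V = ⊥ ∧ U ⊔ V = ⊤) :
    letI S := A ⋊[(Subgroup.zpowers b).subtype] ↥(Subgroup.zpowers b)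
    letI E : Subgroup S :=
      Subgroup.center S ⊔
        (SemidirectProduct.inr : ↥(Subgroup.zpowers b) →* S).range
    Subgroup.centralizer (E : Set S) = E ∧
    Nat.card ↥(Subgroup.normalizer (E : Set S)) = p ^ 3 ∧
    (¬∀ x y : ↥(Subgroup.normalizer (E : Set S)), x * y = y * x) ∧
    (∀ x : ↥(Subgroup.normalizer (E : Set S)), x ^ p = 1) :=
  stmt17_general p hp hodd A hcard hexp b hb hindec
end
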